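/- arXiv:1207.1238 — 2 statements merged into one kernel-verified Lean document; each statement's English description precedes it below -/
import Mathlib

section
/- For all finitely supported probability distributions P, Q, R on ℕ, the triangle inequality Δ̲(P,R) ≤ Δ̲(P,Q) + Δ̲(Q,R) holds; together with nonnegativity, symmetry, and Δ̲(P,P) = 0, this makes Δ̲ a pseudometric on the set of finitely supported probability distributions on ℕ. -/
/-!
For a coupling `S` of `P` and `Q`, `I(S) = H(P) + H(Q) - H(S)`, so `Δ(S) = 2 H(S) - H(P) - H(Q)`,
and `Δ(S) ≥ 0` because summing out a coordinate can only raise each probability, hence lower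
the entropy. The diagonal coupling of `P` with itself has entropy `H(P)`, so `Δ̲(P, P) = 0`, and
swapping coordinates gives symmetry. For the triangle inequality, glue `S₁ ∈ C(P, Q)` and
`S₂ ∈ C(Q, R)` into `U(i, j, k) = S₁(i, j) S₂(j, k) / Q(j)`: its entropy is
`H(S₁) + H(S₂) - H(Q)`, and its `(i, k)`-marginal `S₃ ∈ C(P, R)` has `H(S₃) ≤ H(U)`, whence
`Δ(S₃) ≤ Δ(S₁) + Δ(S₂)`.
-/

open Real

/-- A finitely supported probability distribution on `ℕ`. -/
def IsFinProb (P : ℕ → ℝ) : Prop :=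
  (∀ i, 0 ≤ P i) ∧ (Function.support P).Finite ∧ ∑ᶠ i, P i = 1

/-- Membership in the set `C(P,Q)` of finitely supported couplings of `P` and `Q`. -/
def MemCouplingN (P Q : ℕ → ℝ) (S : ℕ × ℕ → ℝ) : Prop :=
  (∀ x, 0 ≤ S x) ∧ (Function.support S).Finite ∧
  (∀ i, ∑ᶠ j, S (i, j) = P i) ∧ (∀ j, ∑ᶠ i, S (i, j) = Q j)

/-- Shannon entropy of a distribution on `ℕ` (natural log, `0 log 0 = 0`
since `Real.log 0 = 0`). -/
noncomputable def entN (P : ℕ → ℝ) : ℝ := -∑ᶠ i, P i * Real.log (P i)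

/-- Joint entropy of a coupling. -/
noncomputable def entN2 (S : ℕ × ℕ → ℝ) : ℝ := -∑ᶠ x, S x * Real.log (S x)

/-- Mutual information of a coupling `S` of `P` and `Q` (terms with `S x = 0`
vanish). -/
noncomputable def mutInfoN (P Q : ℕ → ℝ) (S : ℕ × ℕ → ℝ) : ℝ :=
  ∑ᶠ x : ℕ × ℕ, S x * Real.log (S x / (P x.1 * Q x.2))

/-- Variation of information of a coupling. -/
noncomputable def vi (P Q : ℕ → ℝ) (S : ℕ × ℕ → ℝ) : ℝ :=
  entN2 S - mutInfoN P Q S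

/-- `Δ̲(P,Q)`: the infimum of the variation of information over all couplings. -/
noncomputable def viDist (P Q : ℕ → ℝ) : ℝ :=
  sInf {d : ℝ | ∃ S : ℕ × ℕ → ℝ, MemCouplingN P Q S ∧ d = vi P Q S}

open Function

section Marginals

variable {α β M : Type*}

theorem finsum_comm_of_hasFiniteSupport [AddCommMonoid M] {f : α × β → M}
    (hf : HasFiniteSupport f) : ∑ᶠ a, ∑ᶠ b, f (a, b) = ∑ᶠ b, ∑ᶠ a, f (a, b) := by
  rw [← finsum_curry f hf, ← finsum_comp_equiv (Equiv.prodComm β α)]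
  exact finsum_curry _ (hf.comp_of_injective (Equiv.prodComm β α).injective)

theorem Function.HasFiniteSupport.finsum_slice [AddCommMonoid M] {f : α × β → M}
    (hf : HasFiniteSupport f) : HasFiniteSupport fun a => ∑ᶠ b, f (a, b) := by
  refine (hf.image Prod.fst).subset fun a ha => ?_
  obtain ⟨b, hb⟩ : ∃ b, f (a, b) ≠ 0 := by
    by_contra! h
    exact ha (finsum_eq_zero_of_forall_eq_zero h)
  exact ⟨(a, b), hb, rfl⟩

theorem finsum_mul_comp_fst {S : α × β → ℝ} (hS : HasFiniteSupport S) (g : α → ℝ) :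
    ∑ᶠ x, S x * g x.1 = ∑ᶠ a, (∑ᶠ b, S (a, b)) * g a := by
  rw [finsum_curry _ (hS.fun_mul_left _)]
  simp_rw [finsum_mul]

theorem finsum_mul_comp_snd {S : α × β → ℝ} (hS : HasFiniteSupport S) (g : β → ℝ) :
    ∑ᶠ x, S x * g x.2 = ∑ᶠ b, (∑ᶠ a, S (a, b)) * g b := by
  rw [← finsum_comp_equiv (Equiv.prodComm β α)]
  exact finsum_mul_comp_fst (hS.comp_of_injective (Equiv.prodComm β α).injective) g

theorem finsum_mul_log_le_finsum_marginal {S : α × β → ℝ} (h0 : ∀ x, 0 ≤ S x)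
    (hS : HasFiniteSupport S) :
    ∑ᶠ x, S x * log (S x) ≤ ∑ᶠ a, (∑ᶠ b, S (a, b)) * log (∑ᶠ b, S (a, b)) := by
  rw [← finsum_mul_comp_fst hS]
  refine finsum_le_finsum' (hS.fun_mul_left _) (hS.fun_mul_left _) fun x => ?_
  rcases (h0 x).eq_or_lt with hx | hx
  · simp [← hx]
  · have hle : S x ≤ ∑ᶠ b, S (x.1, b) :=
      single_le_finsum x.2 (hS.comp_of_injective (Prod.mk_right_injective x.1)) fun _ => h0 _
    exact mul_le_mul_of_nonneg_left (log_le_log hx hle) hx.le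

end Marginals

theorem entN2_comp_swap (S : ℕ × ℕ → ℝ) : entN2 (S ∘ Prod.swap) = entN2 S :=
  congrArg Neg.neg (finsum_comp_equiv (Equiv.prodComm ℕ ℕ) (f := fun x => S x * log (S x)))

namespace MemCouplingN

variable {P Q : ℕ → ℝ} {S : ℕ × ℕ → ℝ}

theorem nonneg (hS : MemCouplingN P Q S) (x : ℕ × ℕ) : 0 ≤ S x := hS.1 x

theorem hasFiniteSupport (hS : MemCouplingN P Q S) : HasFiniteSupport S := hS.2.1

theorem marginal_fst (hS : MemCouplingN P Q S) (i : ℕ) : ∑ᶠ j, S (i, j) = P i := hS.2.2.1 i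

theorem marginal_snd (hS : MemCouplingN P Q S) (j : ℕ) : ∑ᶠ i, S (i, j) = Q j := hS.2.2.2 j

theorem le_fst (hS : MemCouplingN P Q S) (x : ℕ × ℕ) : S x ≤ P x.1 :=
  (single_le_finsum x.2 (hS.hasFiniteSupport.comp_of_injective (Prod.mk_right_injective x.1))
    fun _ => hS.nonneg _).trans_eq (hS.marginal_fst x.1)

theorem le_snd (hS : MemCouplingN P Q S) (x : ℕ × ℕ) : S x ≤ Q x.2 :=
  (single_le_finsum x.1 (hS.hasFiniteSupport.comp_of_injective (Prod.mk_left_injective x.2))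
    fun _ => hS.nonneg _).trans_eq (hS.marginal_snd x.2)

theorem swap (hS : MemCouplingN P Q S) : MemCouplingN Q P (S ∘ Prod.swap) :=
  ⟨fun _ => hS.nonneg _, hS.hasFiniteSupport.comp_of_injective Prod.swap_injective,
    hS.marginal_snd, hS.marginal_fst⟩

theorem entN_fst_le (hS : MemCouplingN P Q S) : entN P ≤ entN2 S := by
  have h := finsum_mul_log_le_finsum_marginal hS.nonneg hS.hasFiniteSupport
  simp only [hS.marginal_fst] at h
  exact neg_le_neg h

theorem entN_snd_le (hS : MemCouplingN P Q S) : entN Q ≤ entN2 S :=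
  entN2_comp_swap S ▸ hS.swap.entN_fst_le

theorem mutInfoN_eq (hS : MemCouplingN P Q S) :
    mutInfoN P Q S = entN P + entN Q - entN2 S := by
  have hsplit : ∀ x, S x * log (S x / (P x.1 * Q x.2)) =
      S x * log (S x) - S x * log (P x.1) - S x * log (Q x.2) := by
    intro x
    rcases (hS.nonneg x).eq_or_lt with hx | hx
    · simp [← hx]
    · have hPx := hx.trans_le (hS.le_fst x)
      have hQx := hx.trans_le (hS.le_snd x)
      rw [log_div hx.ne' (by positivity), log_mul hPx.ne' hQx.ne']
      ring
  have hfin := hS.hasFiniteSupport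
  rw [mutInfoN, finsum_congr hsplit, finsum_sub_distrib (by fun_prop) (by fun_prop),
    finsum_sub_distrib (by fun_prop) (by fun_prop), finsum_mul_comp_fst hfin fun i => log (P i),
    finsum_mul_comp_snd hfin fun j => log (Q j)]
  simp only [hS.marginal_fst, hS.marginal_snd, entN, entN2]
  ring

theorem vi_eq (hS : MemCouplingN P Q S) : vi P Q S = 2 * entN2 S - entN P - entN Q := by
  rw [vi, hS.mutInfoN_eq]
  ring

theorem vi_nonneg (hS : MemCouplingN P Q S) : 0 ≤ vi P Q S := by
  rw [hS.vi_eq]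
  linarith [hS.entN_fst_le, hS.entN_snd_le]

theorem vi_swap (hS : MemCouplingN P Q S) : vi Q P (S ∘ Prod.swap) = vi P Q S := by
  rw [hS.swap.vi_eq, hS.vi_eq, entN2_comp_swap]
  ring

end MemCouplingN

theorem IsFinProb.memCouplingN_mul {P Q : ℕ → ℝ} (hP : IsFinProb P) (hQ : IsFinProb Q) :
    MemCouplingN P Q (fun x => P x.1 * Q x.2) := by
  obtain ⟨hP0, hPfin, hP1⟩ := hP
  obtain ⟨hQ0, hQfin, hQ1⟩ := hQ
  refine ⟨fun x => mul_nonneg (hP0 _) (hQ0 _), (hPfin.prod hQfin).subset fun x hx => ?_,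
    fun i => ?_, fun j => ?_⟩
  · exact ⟨left_ne_zero_of_mul hx, right_ne_zero_of_mul hx⟩
  · dsimp only
    rw [← mul_finsum, hQ1, mul_one]
  · dsimp only
    rw [← finsum_mul, hP1, one_mul]

section Diagonal

theorem hasFiniteSupport_diag {α M : Type*} [DecidableEq α] [Zero M] {f : α → M}
    (hf : HasFiniteSupport f) :
    HasFiniteSupport fun x : α × α => if x.1 = x.2 then f x.1 else 0 := by
  refine (hf.image fun a => (a, a)).subset fun x hx => ?_
  by_cases h : x.1 = x.2
  · exact ⟨x.1, by simpa [h] using hx, Prod.ext rfl h⟩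
  · simp [h] at hx

variable {P : ℕ → ℝ}

theorem memCouplingN_diag (hP0 : ∀ i, 0 ≤ P i) (hPfin : (support P).Finite) :
    MemCouplingN P P (fun x => if x.1 = x.2 then P x.1 else 0) := by
  refine ⟨fun x => ?_, hasFiniteSupport_diag hPfin, fun i => ?_, fun j => ?_⟩
  · dsimp only
    split_ifs
    exacts [hP0 _, le_rfl]
  · rw [finsum_eq_single _ i fun j hj => if_neg (Ne.symm hj), if_pos rfl]
  · rw [finsum_eq_single _ j fun i hi => if_neg hi, if_pos rfl]

theorem entN2_diag (hPfin : (support P).Finite) :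
    entN2 (fun x => if x.1 = x.2 then P x.1 else 0) = entN P := by
  rw [entN2, finsum_curry _ ((hasFiniteSupport_diag hPfin).fun_mul_left _), entN]
  congr 1
  refine finsum_congr fun i => ?_
  rw [finsum_eq_single _ i fun j hj => by simp [Ne.symm hj]]
  simp

theorem vi_diag (hP0 : ∀ i, 0 ≤ P i) (hPfin : (support P).Finite) :
    vi P P (fun x => if x.1 = x.2 then P x.1 else 0) = 0 := by
  rw [(memCouplingN_diag hP0 hPfin).vi_eq, entN2_diag hPfin]
  ring

end Diagonal

/-- Indexed as `((i, k), j)`, so that summing out the last coordinate gives a coupling of the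
outer marginals. Where `Q j = 0` the junk value `x / 0 = 0` is harmless, as then
`S₁ (i, j) = 0`. -/
noncomputable def glue (Q : ℕ → ℝ) (S₁ S₂ : ℕ × ℕ → ℝ) : (ℕ × ℕ) × ℕ → ℝ :=
  fun u => S₁ (u.1.1, u.2) * S₂ (u.2, u.1.2) / Q u.2

section Glue

variable {P Q R : ℕ → ℝ} {S₁ S₂ : ℕ × ℕ → ℝ}

theorem glue_ne_zero {u : (ℕ × ℕ) × ℕ} (hu : glue Q S₁ S₂ u ≠ 0) :
    S₁ (u.1.1, u.2) ≠ 0 ∧ S₂ (u.2, u.1.2) ≠ 0 ∧ Q u.2 ≠ 0 := by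
  simp only [glue, ne_eq, div_eq_zero_iff, mul_eq_zero, not_or] at hu
  exact ⟨hu.1.1, hu.1.2, hu.2⟩

theorem hasFiniteSupport_glue (h₁ : HasFiniteSupport S₁) (h₂ : HasFiniteSupport S₂) :
    HasFiniteSupport (glue Q S₁ S₂) :=
  ((h₁.prod h₂).image fun p : (ℕ × ℕ) × (ℕ × ℕ) => ((p.1.1, p.2.2), p.1.2)).subset fun u hu =>
    ⟨((u.1.1, u.2), (u.2, u.1.2)), ⟨(glue_ne_zero hu).1, (glue_ne_zero hu).2.1⟩, rfl⟩

theorem glue_nonneg (hS₁ : MemCouplingN P Q S₁) (hS₂ : MemCouplingN Q R S₂)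
    (u : (ℕ × ℕ) × ℕ) : 0 ≤ glue Q S₁ S₂ u :=
  div_nonneg (mul_nonneg (hS₁.nonneg _) (hS₂.nonneg _))
    ((hS₁.nonneg _).trans (hS₁.le_snd (u.1.1, u.2)))

theorem finsum_glue_snd (hS₁ : MemCouplingN P Q S₁) (hS₂ : MemCouplingN Q R S₂) (i j : ℕ) :
    ∑ᶠ k, glue Q S₁ S₂ ((i, k), j) = S₁ (i, j) := by
  rcases eq_or_ne (Q j) 0 with hQ | hQ
  · have h : S₁ (i, j) = 0 := le_antisymm (hQ ▸ hS₁.le_snd (i, j)) (hS₁.nonneg _)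
    simp [glue, h]
  · simp_rw [glue, mul_div_right_comm, ← mul_finsum, hS₂.marginal_fst j,
      div_mul_cancel₀ _ hQ]

theorem finsum_glue_fst (hS₁ : MemCouplingN P Q S₁) (hS₂ : MemCouplingN Q R S₂) (j k : ℕ) :
    ∑ᶠ i, glue Q S₁ S₂ ((i, k), j) = S₂ (j, k) := by
  rcases eq_or_ne (Q j) 0 with hQ | hQ
  · have h : S₂ (j, k) = 0 := le_antisymm (hQ ▸ hS₂.le_fst (j, k)) (hS₂.nonneg _)
    simp [glue, h]
  · simp_rw [glue, mul_comm (S₁ _), mul_div_right_comm, ← mul_finsum, hS₁.marginal_snd j,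
      div_mul_cancel₀ _ hQ]

theorem memCouplingN_glue (hS₁ : MemCouplingN P Q S₁) (hS₂ : MemCouplingN Q R S₂) :
    MemCouplingN P R (fun x => ∑ᶠ j, glue Q S₁ S₂ (x, j)) := by
  have hU : HasFiniteSupport (glue Q S₁ S₂) :=
    hasFiniteSupport_glue hS₁.hasFiniteSupport hS₂.hasFiniteSupport
  refine ⟨fun x => finsum_nonneg fun j => glue_nonneg hS₁ hS₂ _, hU.finsum_slice,
    fun i => ?_, fun k => ?_⟩
  · rw [finsum_comm_of_hasFiniteSupport (f := fun p : ℕ × ℕ => glue Q S₁ S₂ ((i, p.1), p.2))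
      (hU.comp_of_injective fun p q h => by simpa [Prod.ext_iff] using h)]
    simp_rw [finsum_glue_snd hS₁ hS₂]
    exact hS₁.marginal_fst i
  · rw [finsum_comm_of_hasFiniteSupport (f := fun p : ℕ × ℕ => glue Q S₁ S₂ ((p.1, k), p.2))
      (hU.comp_of_injective fun p q h => by simpa [Prod.ext_iff] using h)]
    simp_rw [finsum_glue_fst hS₁ hS₂]
    exact hS₂.marginal_snd k

theorem finsum_glue_mul_left (hS₁ : MemCouplingN P Q S₁) (hS₂ : MemCouplingN Q R S₂)
    (g : ℕ × ℕ → ℝ) : ∑ᶠ u, glue Q S₁ S₂ u * g (u.1.1, u.2) = ∑ᶠ p, S₁ p * g p := by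
  let e := Involutive.toPerm (fun v : (ℕ × ℕ) × ℕ => ((v.1.1, v.2), v.1.2)) fun _ => rfl
  have hU : HasFiniteSupport (glue Q S₁ S₂) :=
    hasFiniteSupport_glue hS₁.hasFiniteSupport hS₂.hasFiniteSupport
  rw [← finsum_comp_equiv e]
  refine (finsum_mul_comp_fst (hU.comp_of_injective e.injective) g).trans ?_
  exact finsum_congr fun p => by rw [← finsum_glue_snd hS₁ hS₂ p.1 p.2]; rfl

theorem finsum_glue_mul_right (hS₁ : MemCouplingN P Q S₁) (hS₂ : MemCouplingN Q R S₂)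
    (g : ℕ × ℕ → ℝ) : ∑ᶠ u, glue Q S₁ S₂ u * g (u.2, u.1.2) = ∑ᶠ p, S₂ p * g p := by
  let e := Involutive.toPerm (fun v : (ℕ × ℕ) × ℕ => ((v.2, v.1.2), v.1.1)) fun _ => rfl
  have hU : HasFiniteSupport (glue Q S₁ S₂) :=
    hasFiniteSupport_glue hS₁.hasFiniteSupport hS₂.hasFiniteSupport
  rw [← finsum_comp_equiv e]
  refine (finsum_mul_comp_fst (hU.comp_of_injective e.injective) g).trans ?_
  exact finsum_congr fun p => by rw [← finsum_glue_fst hS₁ hS₂ p.1 p.2]; rfl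

theorem finsum_glue_mul_log (hS₁ : MemCouplingN P Q S₁) (hS₂ : MemCouplingN Q R S₂) :
    ∑ᶠ u, glue Q S₁ S₂ u * log (glue Q S₁ S₂ u) =
      ∑ᶠ p, S₁ p * log (S₁ p) + ∑ᶠ p, S₂ p * log (S₂ p) - ∑ᶠ j, Q j * log (Q j) := by
  have hsplit : ∀ u, glue Q S₁ S₂ u * log (glue Q S₁ S₂ u) =
      glue Q S₁ S₂ u * log (S₁ (u.1.1, u.2)) + glue Q S₁ S₂ u * log (S₂ (u.2, u.1.2)) -
        glue Q S₁ S₂ u * log (Q u.2) := by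
    intro u
    by_cases hu : glue Q S₁ S₂ u = 0
    · simp [hu]
    · obtain ⟨h₁, h₂, hQ⟩ := glue_ne_zero hu
      rw [glue, log_div (mul_ne_zero h₁ h₂) hQ, log_mul h₁ h₂]
      ring
  have hU : HasFiniteSupport (glue Q S₁ S₂) :=
    hasFiniteSupport_glue hS₁.hasFiniteSupport hS₂.hasFiniteSupport
  rw [finsum_congr hsplit, finsum_sub_distrib (by fun_prop) (by fun_prop),
    finsum_add_distrib (by fun_prop) (by fun_prop),
    finsum_glue_mul_left hS₁ hS₂ (fun p => log (S₁ p)),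
    finsum_glue_mul_right hS₁ hS₂ (fun p => log (S₂ p)),
    finsum_glue_mul_left hS₁ hS₂ (fun p => log (Q p.2)),
    finsum_mul_comp_snd hS₁.hasFiniteSupport fun j => log (Q j)]
  simp_rw [hS₁.marginal_snd]

theorem vi_glue_le (hS₁ : MemCouplingN P Q S₁) (hS₂ : MemCouplingN Q R S₂) :
    vi P R (fun x => ∑ᶠ j, glue Q S₁ S₂ (x, j)) ≤ vi P Q S₁ + vi Q R S₂ := by
  have hent : entN2 (fun x => ∑ᶠ j, glue Q S₁ S₂ (x, j)) ≤ entN2 S₁ + entN2 S₂ - entN Q := by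
    have h := finsum_mul_log_le_finsum_marginal (glue_nonneg hS₁ hS₂)
      (hasFiniteSupport_glue hS₁.hasFiniteSupport hS₂.hasFiniteSupport)
    rw [finsum_glue_mul_log hS₁ hS₂] at h
    simp only [entN2, entN]
    linarith
  rw [(memCouplingN_glue hS₁ hS₂).vi_eq, hS₁.vi_eq, hS₂.vi_eq]
  linarith

end Glue

section viDist

variable {P Q R : ℕ → ℝ}

theorem viDist_le_vi {S : ℕ × ℕ → ℝ} (hS : MemCouplingN P Q S) : viDist P Q ≤ vi P Q S :=
  csInf_le ⟨0, fun _ ⟨_, hS', hd⟩ => hd ▸ hS'.vi_nonneg⟩ ⟨S, hS, rfl⟩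

theorem le_viDist (hP : IsFinProb P) (hQ : IsFinProb Q) {d : ℝ}
    (h : ∀ S, MemCouplingN P Q S → d ≤ vi P Q S) : d ≤ viDist P Q :=
  le_csInf ⟨_, _, hP.memCouplingN_mul hQ, rfl⟩ fun _ ⟨S, hS, hd⟩ => hd ▸ h S hS

theorem viDist_nonneg (P Q : ℕ → ℝ) : 0 ≤ viDist P Q :=
  Real.sInf_nonneg fun _ ⟨_, hS, hd⟩ => hd ▸ hS.vi_nonneg

theorem viDist_comm (P Q : ℕ → ℝ) : viDist P Q = viDist Q P := by
  have key : ∀ P Q : ℕ → ℝ, {d | ∃ S, MemCouplingN P Q S ∧ d = vi P Q S} ⊆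
      {d | ∃ S, MemCouplingN Q P S ∧ d = vi Q P S} :=
    fun _ _ _ ⟨S, hS, hd⟩ => ⟨S ∘ Prod.swap, hS.swap, hd.trans hS.vi_swap.symm⟩
  exact congrArg sInf ((key P Q).antisymm (key Q P))

theorem viDist_self (hP0 : ∀ i, 0 ≤ P i) (hPfin : (support P).Finite) : viDist P P = 0 :=
  ((viDist_le_vi (memCouplingN_diag hP0 hPfin)).trans_eq (vi_diag hP0 hPfin)).antisymm
    (viDist_nonneg P P)

theorem viDist_triangle (hP : IsFinProb P) (hQ : IsFinProb Q) (hR : IsFinProb R) :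
    viDist P R ≤ viDist P Q + viDist Q R := by
  rw [← sub_le_iff_le_add]
  refine le_viDist hP hQ fun S₁ hS₁ => ?_
  rw [sub_le_comm]
  refine le_viDist hQ hR fun S₂ hS₂ => ?_
  rw [sub_le_iff_le_add']
  exact (viDist_le_vi (memCouplingN_glue hS₁ hS₂)).trans (vi_glue_le hS₁ hS₂)

end viDist

/-- the triangle inequality for `Δ̲`; together with nonnegativity,
symmetry and `Δ̲(P,P) = 0`, this makes `Δ̲` a pseudometric on finitely supported
probability distributions on `ℕ`. -/
theorem viDist_pseudometric (P Q R : ℕ → ℝ)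
    (hP : IsFinProb P) (hQ : IsFinProb Q) (hR : IsFinProb R) :
    viDist P R ≤ viDist P Q + viDist Q R ∧
    0 ≤ viDist P Q ∧ viDist P Q = viDist Q P ∧ viDist P P = 0 :=
  ⟨viDist_triangle hP hQ hR, viDist_nonneg P Q, viDist_comm P Q, viDist_self hP.1 hP.2.1⟩
end

section
/- Let m ≥ 1 and let d_1, …, d_{3m} and k be positive integers with k/4 < d_j < k/2 for all j and ∑_{j=1}^{3m} d_j = mk. Set p_i = d_i/(mk) and P = (p_1, …, p_{3m}). Then there exists a partition of {1, …, 3m} into m pairwise disjoint subsets covering {1, …, 3m} with equal sums ∑_{j∈J_r} d_j if and only if there exists a matrix S ∈ C(P,m) with I(S) = log m. -/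
open Finset Real

/-- A probability vector: nonnegative entries summing to 1. -/
def IsProbVec {n : ℕ} (P : Fin n → ℝ) : Prop :=
  (∀ i, 0 ≤ P i) ∧ ∑ i, P i = 1

/-- Membership in `C(P,m)`: `n × m` matrices with nonnegative entries and row sums `P`
(the column marginal is unconstrained). -/
def MemCouplingRow {n m : ℕ} (P : Fin n → ℝ) (S : Fin n → Fin m → ℝ) : Prop :=
  (∀ i j, 0 ≤ S i j) ∧ (∀ i, ∑ j, S i j = P i)

/-- The column marginal `Q(S)` of a matrix `S`. -/
noncomputable def colMarginal {n m : ℕ} (S : Fin n → Fin m → ℝ) : Fin m → ℝ :=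
  fun j => ∑ i, S i j

/-- Shannon entropy of a vector (natural log, `0 log 0 = 0` since `Real.log 0 = 0`). -/
noncomputable def vecEnt {n : ℕ} (P : Fin n → ℝ) : ℝ :=
  -∑ i, P i * Real.log (P i)

/-- Joint (Shannon) entropy of a matrix. -/
noncomputable def matEnt {n m : ℕ} (S : Fin n → Fin m → ℝ) : ℝ :=
  -∑ i, ∑ j, S i j * Real.log (S i j)

/-- Mutual information of `S ∈ C(P,m)`: `I(S) = ∑ sᵢⱼ log(sᵢⱼ/(pᵢ qⱼ))` with
`qⱼ = ∑ᵢ sᵢⱼ` (terms with `sᵢⱼ = 0` vanish). -/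
noncomputable def mutInfoRow {n m : ℕ} (P : Fin n → ℝ) (S : Fin n → Fin m → ℝ) : ℝ :=
  ∑ i, ∑ j, S i j * Real.log (S i j / (P i * colMarginal S j))

/-!
Write `H` for entropy and `Q` for the column marginal of `S ∈ C(P,m)`. Then
`I(S) = H(P) + H(Q) - H(S)`, where `H(S) ≥ H(P)` because every entry satisfies `sᵢⱼ ≤ pᵢ`, and
`H(Q) ≤ log m`. Hence `I(S) = log m` exactly when every entry of `S` is `0` or `pᵢ` and `Q` is
uniform. When all `pᵢ > 0`, such an `S` puts each row in exactly one column, and the supports of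
the columns form a partition of the rows into `m` blocks of weight `1/m`, i.e. of `d`-sum `k`.
Conversely, such a partition gives such an `S`.
-/

section UniformBound

variable {m : ℕ} {Q : Fin m → ℝ}

/-- The gaps in `x - 1 ≤ x log x` at the points `x = m qⱼ`, summed over `j`. -/
lemma IsProbVec.sum_mul_log_sub (hQ : IsProbVec Q) :
    ∑ j, (m * Q j * log (m * Q j) - (m * Q j - 1)) = m * (log m - vecEnt Q) := by
  have hterm : ∀ j, m * Q j * log (m * Q j) = Q j * (m * log m) + m * (Q j * log (Q j)) :=
    fun j => by have := negMulLog_mul (m : ℝ) (Q j); simp only [negMulLog] at this; linarith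
  simp only [hterm, vecEnt, sum_sub_distrib, sum_add_distrib, ← sum_mul, ← mul_sum, hQ.2]
  simp only [one_mul, mul_one, sum_const, card_univ, Fintype.card_fin, nsmul_eq_mul, sub_self,
    sub_zero]
  ring

lemma IsProbVec.pos_card (hQ : IsProbVec Q) : 0 < m :=
  Nat.pos_of_ne_zero fun h => by subst h; simpa using hQ.2

lemma IsProbVec.vecEnt_le_log (hQ : IsProbVec Q) : vecEnt Q ≤ log m := by
  have hsum : 0 ≤ (m : ℝ) * (log m - vecEnt Q) := hQ.sum_mul_log_sub ▸ sum_nonneg fun j _ =>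
    sub_nonneg.2 (self_sub_one_le_mul_log (by have := hQ.1 j; positivity))
  have : (0 : ℝ) < m := by exact_mod_cast hQ.pos_card
  nlinarith

lemma IsProbVec.vecEnt_eq_log_iff (hQ : IsProbVec Q) :
    vecEnt Q = log m ↔ ∀ j, Q j = (m : ℝ)⁻¹ := by
  have hm : (m : ℝ) ≠ 0 := by exact_mod_cast hQ.pos_card.ne'
  have hx : ∀ j, 0 ≤ (m : ℝ) * Q j := fun j => by have := hQ.1 j; positivity
  rw [eq_comm, ← sub_eq_zero, ← mul_eq_zero_iff_left hm, ← hQ.sum_mul_log_sub,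
    sum_eq_zero_iff_of_nonneg fun j _ => sub_nonneg.2 (self_sub_one_le_mul_log (hx j))]
  refine forall_congr' fun j => ⟨fun h => ?_, fun h => ?_⟩
  · by_contra hne
    have := self_sub_one_lt_mul_log (hx j) fun h1 => hne (eq_inv_of_mul_eq_one_right h1)
    linarith [h (mem_univ j)]
  · simp [h, hm]

end UniformBound

section Entropy

variable {n m : ℕ} {P : Fin n → ℝ} {S : Fin n → Fin m → ℝ}

lemma mul_log_le_mul_log_of_le {s p : ℝ} (hs : 0 ≤ s) (hsp : s ≤ p) :
    s * log s ≤ s * log p := by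
  rcases hs.eq_or_lt with rfl | hs
  · simp
  · exact mul_le_mul_of_nonneg_left (log_le_log hs hsp) hs.le

lemma mul_log_eq_mul_log_iff {s p : ℝ} (hs : 0 ≤ s) (hsp : s ≤ p) :
    s * log s = s * log p ↔ s = 0 ∨ s = p := by
  rcases hs.eq_or_lt with rfl | hs
  · simp
  · rw [mul_right_inj' hs.ne', log_injOn_pos.eq_iff hs (hs.trans_le hsp)]
    simp [hs.ne']

lemma single_le_colMarginal (hS : ∀ i j, 0 ≤ S i j) (i : Fin n) (j : Fin m) :
    S i j ≤ colMarginal S j :=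
  single_le_sum (fun i' _ => hS i' j) (mem_univ i)

lemma MemCouplingRow.le_row (hS : MemCouplingRow P S) (i : Fin n) (j : Fin m) :
    S i j ≤ P i :=
  hS.2 i ▸ single_le_sum (fun j' _ => hS.1 i j') (mem_univ j)

lemma MemCouplingRow.isProbVec_colMarginal (hS : MemCouplingRow P S) (hP : ∑ i, P i = 1) :
    IsProbVec (colMarginal S) :=
  ⟨fun j => sum_nonneg fun i _ => hS.1 i j, by
    simp only [colMarginal]
    rw [sum_comm, ← hP]
    exact sum_congr rfl fun i _ => hS.2 i⟩

lemma MemCouplingRow.mutInfoRow_eq (hS : MemCouplingRow P S) :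
    mutInfoRow P S = vecEnt P + vecEnt (colMarginal S) - matEnt S := by
  have hterm : ∀ i j, S i j * log (S i j / (P i * colMarginal S j)) =
      S i j * log (S i j) - S i j * log (P i) - S i j * log (colMarginal S j) := by
    intro i j
    rcases (hS.1 i j).eq_or_lt with h | h
    · simp [← h]
    have hPi := h.trans_le (hS.le_row i j)
    have hQj := h.trans_le (single_le_colMarginal hS.1 i j)
    rw [log_div h.ne' (mul_pos hPi hQj).ne', log_mul hPi.ne' hQj.ne']
    ring
  have hrows : ∑ i, ∑ j, S i j * log (P i) = ∑ i, P i * log (P i) := by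
    simp_rw [← sum_mul, hS.2]
  have hcols : ∑ i, ∑ j, S i j * log (colMarginal S j) =
      ∑ j, colMarginal S j * log (colMarginal S j) := by
    rw [sum_comm]
    simp_rw [← sum_mul]
    rfl
  simp only [mutInfoRow, vecEnt, matEnt, hterm, sum_sub_distrib, hrows, hcols]
  ring

lemma MemCouplingRow.matEnt_sub_vecEnt (hS : MemCouplingRow P S) :
    matEnt S - vecEnt P = ∑ i, ∑ j, (S i j * log (P i) - S i j * log (S i j)) := by
  simp_rw [matEnt, vecEnt, sum_sub_distrib, ← sum_mul, hS.2]
  ring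

lemma MemCouplingRow.vecEnt_le_matEnt (hS : MemCouplingRow P S) : vecEnt P ≤ matEnt S :=
  sub_nonneg.1 <| hS.matEnt_sub_vecEnt ▸ sum_nonneg fun i _ => sum_nonneg fun j _ =>
    sub_nonneg.2 (mul_log_le_mul_log_of_le (hS.1 i j) (hS.le_row i j))

def IsDeterministic (P : Fin n → ℝ) (S : Fin n → Fin m → ℝ) : Prop :=
  ∀ i j, S i j = 0 ∨ S i j = P i

lemma MemCouplingRow.matEnt_eq_vecEnt_iff (hS : MemCouplingRow P S) :
    matEnt S = vecEnt P ↔ IsDeterministic P S := by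
  have hnonneg : ∀ i j, 0 ≤ S i j * log (P i) - S i j * log (S i j) := fun i j =>
    sub_nonneg.2 (mul_log_le_mul_log_of_le (hS.1 i j) (hS.le_row i j))
  rw [← sub_eq_zero, hS.matEnt_sub_vecEnt,
    sum_eq_zero_iff_of_nonneg fun i _ => sum_nonneg fun j _ => hnonneg i j]
  simp_rw [sum_eq_zero_iff_of_nonneg fun j _ => hnonneg _ j, mem_univ, true_imp_iff,
    sub_eq_zero, eq_comm (a := S _ _ * log (P _))]
  exact forall₂_congr fun i j => mul_log_eq_mul_log_iff (hS.1 i j) (hS.le_row i j)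

lemma MemCouplingRow.mutInfoRow_eq_log_iff (hS : MemCouplingRow P S) (hP : ∑ i, P i = 1) :
    mutInfoRow P S = log m ↔ IsDeterministic P S ∧ ∀ j, colMarginal S j = (m : ℝ)⁻¹ := by
  have hQ := hS.isProbVec_colMarginal hP
  have hPS := hS.vecEnt_le_matEnt
  have hQm := hQ.vecEnt_le_log
  rw [hS.mutInfoRow_eq, ← hS.matEnt_eq_vecEnt_iff, ← hQ.vecEnt_eq_log_iff]
  exact ⟨fun h => ⟨by linarith, by linarith⟩, fun ⟨h₁, h₂⟩ => by linarith⟩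

end Entropy

section Partition

variable {n m : ℕ}

def IsBlockPartition (J : Fin m → Finset (Fin n)) : Prop :=
  (∀ r r', r ≠ r' → Disjoint (J r) (J r')) ∧ (univ : Finset (Fin n)) = univ.biUnion J

variable {J : Fin m → Finset (Fin n)}

lemma IsBlockPartition.existsUnique_mem (hJ : IsBlockPartition J) (i : Fin n) :
    ∃! r, i ∈ J r := by
  obtain ⟨r, -, hr⟩ := mem_biUnion.1 (hJ.2 ▸ mem_univ i)
  exact ⟨r, hr, fun r' hr' => by_contra fun hne => disjoint_left.1 (hJ.1 r' r hne) hr' hr⟩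

lemma IsBlockPartition.sum_eq_of_sum_eq {d : Fin n → ℕ} {k : ℕ} (hJ : IsBlockPartition J)
    (heq : ∀ r r', ∑ i ∈ J r, d i = ∑ i ∈ J r', d i) (hsum : ∑ i, d i = m * k) (r : Fin m) :
    ∑ i ∈ J r, d i = k := by
  have hm : 0 < m := r.pos
  refine Nat.eq_of_mul_eq_mul_left hm ?_
  rw [← hsum, hJ.2, sum_biUnion fun r₁ _ r₂ _ => hJ.1 r₁ r₂]
  simp [heq _ r]

def blockChannel (P : Fin n → ℝ) (J : Fin m → Finset (Fin n)) : Fin n → Fin m → ℝ :=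
  fun i r => if i ∈ J r then P i else 0

variable {P : Fin n → ℝ}

lemma isDeterministic_blockChannel : IsDeterministic P (blockChannel P J) := fun i r => by
  unfold blockChannel
  split_ifs <;> simp

lemma colMarginal_blockChannel (r : Fin m) :
    colMarginal (blockChannel P J) r = ∑ i ∈ J r, P i := by
  simp [colMarginal, blockChannel, sum_ite_mem]

lemma IsBlockPartition.memCouplingRow_blockChannel (hJ : IsBlockPartition J)
    (hP : ∀ i, 0 ≤ P i) : MemCouplingRow P (blockChannel P J) := by
  refine ⟨fun i r => by unfold blockChannel; split_ifs <;> simp [hP i], fun i => ?_⟩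
  obtain ⟨r, hr, huniq⟩ := hJ.existsUnique_mem i
  simp only [blockChannel]
  rw [sum_eq_single r (fun r' _ hne => if_neg fun h => hne (huniq r' h)) (by simp)]
  exact if_pos hr

noncomputable def supportBlocks (S : Fin n → Fin m → ℝ) (r : Fin m) : Finset (Fin n) :=
  univ.filter (S · r ≠ 0)

variable {S : Fin n → Fin m → ℝ}

lemma colMarginal_eq_sum_supportBlocks (hdet : IsDeterministic P S) (r : Fin m) :
    colMarginal S r = ∑ i ∈ supportBlocks S r, P i := by
  rw [colMarginal, ← sum_filter_ne_zero]
  exact sum_congr rfl fun i hi => (hdet i r).resolve_left (mem_filter.1 hi).2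

lemma isBlockPartition_supportBlocks (hS : MemCouplingRow P S) (hdet : IsDeterministic P S)
    (hP : ∀ i, 0 < P i) : IsBlockPartition (supportBlocks S) := by
  refine ⟨fun r r' hne => disjoint_left.2 fun i hi hi' => ?_, ?_⟩
  · simp only [supportBlocks, mem_filter] at hi hi'
    have hle : S i r + S i r' ≤ P i := by
      rw [← sum_pair hne, ← hS.2 i]
      exact sum_le_sum_of_subset_of_nonneg (subset_univ _) fun j _ _ => hS.1 i j
    rw [(hdet i r).resolve_left hi.2, (hdet i r').resolve_left hi'.2] at hle
    linarith [hP i]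
  · refine (eq_univ_of_forall fun i => ?_).symm
    obtain ⟨r, -, hr⟩ := exists_ne_zero_of_sum_ne_zero ((hS.2 i).trans_ne (hP i).ne')
    simpa [supportBlocks] using ⟨r, hr⟩

end Partition

theorem three_partition_iff_optimal_channel_general (m : ℕ) (hm : 1 ≤ m)
    (d : Fin (3 * m) → ℕ) (k : ℕ) (hd : ∀ j, 0 < d j) (hk : 0 < k)
    (hsum : ∑ j, d j = m * k) :
    (∃ J : Fin m → Finset (Fin (3 * m)),
      (∀ r r' : Fin m, r ≠ r' → Disjoint (J r) (J r')) ∧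
      (Finset.univ : Finset (Fin (3 * m))) = Finset.univ.biUnion J ∧
      (∀ r r' : Fin m, ∑ j ∈ J r, d j = ∑ j ∈ J r', d j)) ↔
    (∃ S : Fin (3 * m) → Fin m → ℝ,
      MemCouplingRow (fun i => (d i : ℝ) / ((m * k : ℕ) : ℝ)) S ∧
      mutInfoRow (fun i => (d i : ℝ) / ((m * k : ℕ) : ℝ)) S = Real.log m) := by
  set c : ℝ := ((m * k : ℕ) : ℝ)
  set P : Fin (3 * m) → ℝ := fun i => (d i : ℝ) / c
  have hc : 0 < c := by positivity
  have hP : ∀ i, 0 < P i := fun i => div_pos (by exact_mod_cast hd i) hc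
  have hPsum : ∑ i, P i = 1 := by
    rw [← sum_div, div_eq_one_iff_eq hc.ne', ← Nat.cast_sum, hsum]
  have hblock : ∀ s : Finset (Fin (3 * m)), ∑ i ∈ s, P i = ((∑ i ∈ s, d i : ℕ) : ℝ) / c :=
    fun s => by push_cast; exact (sum_div ..).symm
  constructor
  · rintro ⟨J, hdisj, hcov, heq⟩
    have hJ : IsBlockPartition J := ⟨hdisj, hcov⟩
    have hS := hJ.memCouplingRow_blockChannel fun i => (hP i).le
    refine ⟨blockChannel P J, hS,
      (hS.mutInfoRow_eq_log_iff hPsum).2 ⟨isDeterministic_blockChannel, fun r => ?_⟩⟩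
    have hk' : (k : ℝ) ≠ 0 := by exact_mod_cast hk.ne'
    rw [colMarginal_blockChannel, hblock, hJ.sum_eq_of_sum_eq heq hsum r]
    simp only [c, Nat.cast_mul]
    exact div_mul_cancel_right₀ hk' _
  · rintro ⟨S, hS, hI⟩
    obtain ⟨hdet, hunif⟩ := (hS.mutInfoRow_eq_log_iff hPsum).1 hI
    obtain ⟨hdisj, hcov⟩ := isBlockPartition_supportBlocks hS hdet hP
    refine ⟨supportBlocks S, hdisj, hcov, fun r r' => ?_⟩
    have h := (hunif r).trans (hunif r').symm
    rw [colMarginal_eq_sum_supportBlocks hdet, colMarginal_eq_sum_supportBlocks hdet, hblock,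
      hblock, div_left_inj' hc.ne'] at h
    exact_mod_cast h

/-- reduction of 3-Partition to Optimal Channel: an equal-sums
partition exists iff some `S ∈ C(P,m)` with `P = (dᵢ/(mk))` achieves
`I(S) = log m`. -/
theorem three_partition_iff_optimal_channel (m : ℕ) (hm : 1 ≤ m)
    (d : Fin (3 * m) → ℕ) (k : ℕ) (hd : ∀ j, 0 < d j) (hk : 0 < k)
    (hlow : ∀ j, k < 4 * d j) (hhigh : ∀ j, 2 * d j < k)
    (hsum : ∑ j, d j = m * k) :
    (∃ J : Fin m → Finset (Fin (3 * m)),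
      (∀ r r' : Fin m, r ≠ r' → Disjoint (J r) (J r')) ∧
      (Finset.univ : Finset (Fin (3 * m))) = Finset.univ.biUnion J ∧
      (∀ r r' : Fin m, ∑ j ∈ J r, d j = ∑ j ∈ J r', d j)) ↔
    (∃ S : Fin (3 * m) → Fin m → ℝ,
      MemCouplingRow (fun i => (d i : ℝ) / ((m * k : ℕ) : ℝ)) S ∧
      mutInfoRow (fun i => (d i : ℝ) / ((m * k : ℕ) : ℝ)) S = Real.log m) :=
  three_partition_iff_optimal_channel_general m hm d k hd hk hsum
end
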